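/- arXiv:2005.08903 — 4 statements merged into one kernel-verified Lean document; each statement's English description precedes it below -/
import Mathlib

section
/- Let A ∈ ℂ^{n×n} with ρ(A) < 1 and Q Hermitian positive semidefinite, and let X_k be the Smith iterates (X_0 = 0, X_{k+1} = Q + A*X_k A). Define the squared Smith iteration A_0 = A, A_{k+1} = A_k², Q_0 = Q, Q_{k+1} = Q_k + A_k* Q_k A_k. Then Q_k = X_{2^k} for all k ≥ 0. -/
open Matrix
open scoped ComplexOrder

theorem squared_smith_doubling {n : ℕ} (A Q : Matrix (Fin n) (Fin n) ℂ)
    (hρ : ∀ μ ∈ spectrum ℂ A, ‖μ‖ < 1) (hQ : Q.PosSemidef)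
    (Xs : ℕ → Matrix (Fin n) (Fin n) ℂ)
    (hX0 : Xs 0 = 0) (hXrec : ∀ k, Xs (k + 1) = Q + Aᴴ * Xs k * A)
    (As Qs : ℕ → Matrix (Fin n) (Fin n) ℂ)
    (hA0 : As 0 = A) (hArec : ∀ k, As (k + 1) = As k * As k)
    (hQ0 : Qs 0 = Q) (hQrec : ∀ k, Qs (k + 1) = Qs k + (As k)ᴴ * Qs k * As k) :
    ∀ k, Qs k = Xs (2 ^ k) := by
  have hshift : ∀ p m, Xs (p + m) = Xs p + (Aᴴ) ^ p * Xs m * A ^ p := by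
    intro p
    induction p with
    | zero => intro m; simp [hX0]
    | succ p ih =>
      intro m
      have h1 : p + 1 + m = (p + m) + 1 := by ring
      rw [h1, hXrec, ih, hXrec p,
        show (Aᴴ) ^ (p + 1) = Aᴴ * (Aᴴ) ^ p from pow_succ' _ _,
        show A ^ (p + 1) = A ^ p * A from pow_succ _ _]
      noncomm_ring
  have hAs : ∀ k, As k = A ^ (2 ^ k) := by
    intro k
    induction k with
    | zero => simpa using hA0
    | succ k ih =>
      rw [hArec, ih, ← pow_add, pow_succ, Nat.mul_two]
  intro k
  induction k with
  | zero =>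
    have h1 : Xs 1 = Q + Aᴴ * Xs 0 * A := hXrec 0
    simp [hQ0, h1, hX0]
  | succ k ih =>
    rw [hQrec, ih, hAs, Matrix.conjTranspose_pow, pow_succ 2 k, Nat.mul_two, hshift]
end

section
/- Let A, Q ∈ ℂ^{n×n} with Q Hermitian, τ ∈ ℂ, and suppose A - τ̄I is invertible. If X is Hermitian and satisfies A*X + XA + Q = 0, then X - c(A)* X c(A) = 2Re(τ) (A* - τI)^{-1} Q (A - τ̄I)^{-1}, where c(A) = (A + τI)(A - τ̄I)^{-1}. -/
open Matrix

theorem lyapunov_to_stein {n : ℕ} (A Q X : Matrix (Fin n) (Fin n) ℂ) (τ : ℂ)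
    (hQ : Q.IsHermitian) (hX : X.IsHermitian)
    (hinv : IsUnit (A - (starRingEnd ℂ τ) • (1 : Matrix (Fin n) (Fin n) ℂ)))
    (hLyap : Aᴴ * X + X * A + Q = 0) :
    X - ((A + τ • 1) * (A - (starRingEnd ℂ τ) • 1)⁻¹)ᴴ * X *
        ((A + τ • 1) * (A - (starRingEnd ℂ τ) • 1)⁻¹) =
      ((2 * τ.re : ℝ) : ℂ) • ((Aᴴ - τ • 1)⁻¹ * Q * (A - (starRingEnd ℂ τ) • 1)⁻¹) := by
  set B : Matrix (Fin n) (Fin n) ℂ := A - (starRingEnd ℂ τ) • 1 with hBdef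
  have hBH : Bᴴ = Aᴴ - τ • 1 := by
    simp [hBdef, Matrix.conjTranspose_sub, Matrix.conjTranspose_smul]
  have hBd : IsUnit B.det := (Matrix.isUnit_iff_isUnit_det B).mp hinv
  have hBHd : IsUnit Bᴴ.det := by
    rw [Matrix.det_conjTranspose]
    exact hBd.star
  have h1 : B⁻¹ * B = 1 := Matrix.nonsing_inv_mul B hBd
  have h2 : B * B⁻¹ = 1 := Matrix.mul_nonsing_inv B hBd
  have h3 : (Bᴴ)⁻¹ * Bᴴ = 1 := Matrix.nonsing_inv_mul _ hBHd
  have h4 : Bᴴ * (Bᴴ)⁻¹ = 1 := Matrix.mul_nonsing_inv _ hBHd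
  have hct : (B⁻¹)ᴴ = (Bᴴ)⁻¹ := Matrix.conjTranspose_nonsing_inv B
  have hQneg : Aᴴ * X + X * A = -Q := by
    have := hLyap
    linear_combination (norm := abel) this
  have hc : ((2 * τ.re : ℝ) : ℂ) = τ + starRingEnd ℂ τ := by
    rw [Complex.add_conj]
  have hM : Bᴴ * X * B - (A + τ • 1)ᴴ * X * (A + τ • 1)
      = ((2 * τ.re : ℝ) : ℂ) • Q := by
    rw [hBH, hc]
    have hAH : (A + τ • 1)ᴴ = Aᴴ + (starRingEnd ℂ τ) • 1 := by
      simp [Matrix.conjTranspose_add, Matrix.conjTranspose_smul]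
    rw [hAH, hBdef]
    have : (Aᴴ - τ • 1) * X * (A - (starRingEnd ℂ τ) • 1)
        - (Aᴴ + (starRingEnd ℂ τ) • 1) * X * (A + τ • 1)
        = -((τ + starRingEnd ℂ τ) • (Aᴴ * X + X * A)) := by
      simp only [Matrix.sub_mul, Matrix.mul_sub, Matrix.add_mul, Matrix.mul_add,
        Matrix.smul_mul, Matrix.mul_smul, one_mul, mul_one]
      module
    rw [this, hQneg]
    simp
  calc X - ((A + τ • 1) * B⁻¹)ᴴ * X * ((A + τ • 1) * B⁻¹)
      = (Bᴴ)⁻¹ * (Bᴴ * X * B - (A + τ • 1)ᴴ * X * (A + τ • 1)) * B⁻¹ := by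
        rw [Matrix.conjTranspose_mul, hct]
        rw [Matrix.mul_sub, Matrix.sub_mul]
        congr 1
        · calc X = 1 * X * 1 := by rw [one_mul, mul_one]
            _ = ((Bᴴ)⁻¹ * Bᴴ) * X * (B * B⁻¹) := by rw [h3, h2]
            _ = (Bᴴ)⁻¹ * (Bᴴ * X * B) * B⁻¹ := by noncomm_ring
        · noncomm_ring
    _ = ((2 * τ.re : ℝ) : ℂ) • ((Aᴴ - τ • 1)⁻¹ * Q * B⁻¹) := by
        rw [hM, ← hBH]
        simp [Matrix.mul_smul, Matrix.smul_mul]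
end

section
/- Let J = [[0, I_n], [-I_n, 0]] ∈ ℂ^{2n×2n}. A block matrix M = [[I, G],[0, B]]^{-1} [[A, 0],[-Q, I]] (with the inverse existing, i.e., B invertible) is symplectic (M*JM = J) if and only if G = G*, Q = Q*, and B = A*. -/
open Matrix

set_option maxHeartbeats 800000

private lemma aux_flip {m : Type*} [Fintype m] [DecidableEq m] (K X : Matrix m m ℂ)
    (hK : IsUnit K.det) (h : Xᴴ * K * X = K) : X * K⁻¹ * Xᴴ = K⁻¹ := by
  have h1 : (K⁻¹ * Xᴴ * K) * X = 1 := by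
    calc (K⁻¹ * Xᴴ * K) * X = K⁻¹ * (Xᴴ * K * X) := by
          simp only [Matrix.mul_assoc]
      _ = 1 := by rw [h, Matrix.nonsing_inv_mul _ hK]
  have h2 : X * (K⁻¹ * Xᴴ * K) = 1 := mul_eq_one_comm.mp h1
  calc X * K⁻¹ * Xᴴ = X * K⁻¹ * Xᴴ * (K * K⁻¹) := by
        rw [Matrix.mul_nonsing_inv _ hK, Matrix.mul_one]
    _ = (X * (K⁻¹ * Xᴴ * K)) * K⁻¹ := by simp only [Matrix.mul_assoc]
    _ = K⁻¹ := by rw [h2, Matrix.one_mul]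

theorem symplectic_block_characterization {n : ℕ}
    (A B G Q : Matrix (Fin n) (Fin n) ℂ) (hB : IsUnit B) :
    (let J : Matrix (Fin n ⊕ Fin n) (Fin n ⊕ Fin n) ℂ := fromBlocks 0 1 (-1) 0
     let M : Matrix (Fin n ⊕ Fin n) (Fin n ⊕ Fin n) ℂ :=
       (fromBlocks 1 G 0 B)⁻¹ * fromBlocks A 0 (-Q) 1
     Mᴴ * J * M = J) ↔ (G.IsHermitian ∧ Q.IsHermitian ∧ B = Aᴴ) := by
  show (((fromBlocks 1 G 0 B)⁻¹ * fromBlocks A 0 (-Q) 1)ᴴ *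
      (fromBlocks 0 1 (-1) 0 : Matrix (Fin n ⊕ Fin n) (Fin n ⊕ Fin n) ℂ) *
      ((fromBlocks 1 G 0 B)⁻¹ * fromBlocks A 0 (-Q) 1) = fromBlocks 0 1 (-1) 0) ↔ _
  set J : Matrix (Fin n ⊕ Fin n) (Fin n ⊕ Fin n) ℂ := fromBlocks 0 1 (-1) 0 with hJ
  set N : Matrix (Fin n ⊕ Fin n) (Fin n ⊕ Fin n) ℂ := fromBlocks 1 G 0 B with hN
  set P : Matrix (Fin n ⊕ Fin n) (Fin n ⊕ Fin n) ℂ := fromBlocks A 0 (-Q) 1 with hP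
  set M : Matrix (Fin n ⊕ Fin n) (Fin n ⊕ Fin n) ℂ := N⁻¹ * P with hM
  have hJinv : J * fromBlocks 0 (-1) 1 0 = 1 := by
    simp [J, fromBlocks_multiply, ← fromBlocks_one]
  have hJdet : IsUnit J.det := Matrix.isUnit_det_of_right_inverse hJinv
  have hJinv' : J⁻¹ = fromBlocks 0 (-1) 1 0 := Matrix.inv_eq_right_inv hJinv
  have hNdet : IsUnit N.det := by
    rw [hN, Matrix.det_fromBlocks_zero₂₁, Matrix.det_one, one_mul]
    exact (Matrix.isUnit_iff_isUnit_det B).mp hB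
  -- step 1: M symplectic iff M J⁻¹ Mᴴ = J⁻¹
  have step1 : Mᴴ * J * M = J ↔ M * J⁻¹ * Mᴴ = J⁻¹ := by
    constructor
    · exact fun h => aux_flip J M hJdet h
    · intro h
      have hKdet : IsUnit (J⁻¹).det := by
        exact Matrix.isUnit_nonsing_inv_det J hJdet
      have := aux_flip J⁻¹ Mᴴ hKdet (by rwa [conjTranspose_conjTranspose])
      rwa [Matrix.nonsing_inv_nonsing_inv _ hJdet, conjTranspose_conjTranspose] at this
  -- step 2: reduce to P J⁻¹ Pᴴ = N J⁻¹ Nᴴ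
  have hMexp : M * J⁻¹ * Mᴴ = N⁻¹ * (P * J⁻¹ * Pᴴ) * (Nᴴ)⁻¹ := by
    have : Mᴴ = Pᴴ * (Nᴴ)⁻¹ := by
      rw [show M = N⁻¹ * P from rfl, conjTranspose_mul, Matrix.conjTranspose_nonsing_inv]
    rw [show M = N⁻¹ * P from rfl, this]
    simp only [Matrix.mul_assoc]
  have hNHdet : IsUnit (Nᴴ).det := by
    rw [Matrix.det_conjTranspose]
    exact hNdet.star
  have step2 : M * J⁻¹ * Mᴴ = J⁻¹ ↔ P * J⁻¹ * Pᴴ = N * J⁻¹ * Nᴴ := by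
    rw [hMexp]
    constructor
    · intro h
      have : N * (N⁻¹ * (P * J⁻¹ * Pᴴ) * (Nᴴ)⁻¹) * Nᴴ = N * J⁻¹ * Nᴴ := by rw [h]
      calc P * J⁻¹ * Pᴴ
          = (N * N⁻¹) * (P * J⁻¹ * Pᴴ) * ((Nᴴ)⁻¹ * Nᴴ) := by
            rw [Matrix.mul_nonsing_inv _ hNdet, Matrix.nonsing_inv_mul _ hNHdet,
              Matrix.one_mul, Matrix.mul_one]
        _ = N * (N⁻¹ * (P * J⁻¹ * Pᴴ) * (Nᴴ)⁻¹) * Nᴴ := by simp only [Matrix.mul_assoc]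
        _ = N * J⁻¹ * Nᴴ := this
    · intro h
      rw [h]
      calc N⁻¹ * (N * J⁻¹ * Nᴴ) * (Nᴴ)⁻¹
          = (N⁻¹ * N) * J⁻¹ * (Nᴴ * (Nᴴ)⁻¹) := by simp only [Matrix.mul_assoc]
        _ = J⁻¹ := by
            rw [Matrix.nonsing_inv_mul _ hNdet, Matrix.mul_nonsing_inv _ hNHdet,
              Matrix.one_mul, Matrix.mul_one]
  -- step 3: block computation
  have hL : P * J⁻¹ * Pᴴ = fromBlocks 0 (-A) Aᴴ (Q - Qᴴ) := by
    rw [hJinv', hP, fromBlocks_conjTranspose]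
    simp [fromBlocks_multiply, sub_eq_add_neg, add_comm]
  have hR : N * J⁻¹ * Nᴴ = fromBlocks (G - Gᴴ) (-Bᴴ) B 0 := by
    rw [hJinv', hN, fromBlocks_conjTranspose]
    simp [fromBlocks_multiply, sub_eq_add_neg]
  rw [step1, step2, hL, hR, fromBlocks_inj]
  constructor
  · rintro ⟨h1, h2, h3, h4⟩
    exact ⟨(sub_eq_zero.mp h1.symm).symm, (sub_eq_zero.mp h4).symm, h3.symm⟩
  · rintro ⟨hG, hQ, hBA⟩
    refine ⟨(sub_eq_zero.mpr hG.symm).symm, by rw [hBA, conjTranspose_conjTranspose],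
      hBA.symm, sub_eq_zero.mpr hQ.symm⟩
end

section
/- Let M₁, M₂, N₁, N₂ ∈ ℂ^{2n×n} with [M₁ M₂] invertible. The factorization [M₁ M₂]^{-1}[N₁ N₂] = [[A₁₁, 0],[A₂₁, I]]^{-1} [[I, A₁₂],[0, A₂₂]] (for some n×n blocks A_{ij}) exists if and only if the 2n×2n matrix [N₁ M₂] is invertible, and in that case [[A₁₁, A₁₂],[A₂₁, A₂₂]] = [N₁ M₂]^{-1} [M₁ N₂]. -/
open Matrix

theorem block_lu_like_factorization {n : ℕ}
    (M₁ M₂ N₁ N₂ : Matrix (Fin n ⊕ Fin n) (Fin n) ℂ)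
    (hM : IsUnit (fromCols M₁ M₂)) :
    ((∃ A₁₁ A₁₂ A₂₁ A₂₂ : Matrix (Fin n) (Fin n) ℂ,
        IsUnit (fromBlocks A₁₁ (0 : Matrix (Fin n) (Fin n) ℂ) A₂₁ (1 : Matrix (Fin n) (Fin n) ℂ)) ∧
        (fromCols M₁ M₂)⁻¹ * fromCols N₁ N₂ =
          (fromBlocks A₁₁ (0 : Matrix (Fin n) (Fin n) ℂ) A₂₁ (1 : Matrix (Fin n) (Fin n) ℂ))⁻¹ * fromBlocks (1 : Matrix (Fin n) (Fin n) ℂ) A₁₂ (0 : Matrix (Fin n) (Fin n) ℂ) A₂₂) ↔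
      IsUnit (fromCols N₁ M₂)) ∧
    (IsUnit (fromCols N₁ M₂) →
      (fromCols M₁ M₂)⁻¹ * fromCols N₁ N₂ =
        (fromBlocks (((fromCols N₁ M₂)⁻¹ * fromCols M₁ N₂).toBlocks₁₁) 0
            (((fromCols N₁ M₂)⁻¹ * fromCols M₁ N₂).toBlocks₂₁) 1)⁻¹ *
          fromBlocks 1 (((fromCols N₁ M₂)⁻¹ * fromCols M₁ N₂).toBlocks₁₂) 0
            (((fromCols N₁ M₂)⁻¹ * fromCols M₁ N₂).toBlocks₂₂)) := by
  obtain ⟨iM⟩ := hM.nonempty_invertible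
  set X : Matrix (Fin n ⊕ Fin n) (Fin n ⊕ Fin n) ℂ :=
    (fromCols M₁ M₂)⁻¹ * fromCols N₁ N₂ with hXdef
  set X₁₁ := X.toBlocks₁₁
  set X₁₂ := X.toBlocks₁₂
  set X₂₁ := X.toBlocks₂₁
  set X₂₂ := X.toBlocks₂₂
  have hXblocks : fromBlocks X₁₁ X₁₂ X₂₁ X₂₂ = X := fromBlocks_toBlocks X
  have hMX : fromCols M₁ M₂ * X = fromCols N₁ N₂ := by
    rw [hXdef, Matrix.mul_inv_cancel_left_of_invertible]
  have hN : fromCols (M₁ * X₁₁ + M₂ * X₂₁) (M₁ * X₁₂ + M₂ * X₂₂) = fromCols N₁ N₂ := by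
    rw [← fromCols_mul_fromBlocks, hXblocks, hMX]
  rw [fromCols_ext_iff] at hN
  obtain ⟨hN₁, hN₂⟩ := hN
  set B : Matrix (Fin n ⊕ Fin n) (Fin n ⊕ Fin n) ℂ := fromBlocks X₁₁ 0 X₂₁ 1 with hBdef
  have hNM : fromCols N₁ M₂ = fromCols M₁ M₂ * B := by
    rw [hBdef, fromCols_mul_fromBlocks]
    simp [hN₁]
  have hMN : fromCols M₁ N₂ = fromCols M₁ M₂ * fromBlocks 1 X₁₂ 0 X₂₂ := by
    rw [fromCols_mul_fromBlocks]
    simp [hN₂]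
  have hUnitIff : IsUnit (fromCols N₁ M₂) ↔ IsUnit X₁₁ := by
    rw [hNM, ← hM.unit_spec, Units.isUnit_units_mul, hBdef,
      Matrix.isUnit_iff_isUnit_det, det_fromBlocks_zero₁₂, det_one, mul_one,
      ← Matrix.isUnit_iff_isUnit_det]
  -- the main computations, assuming `IsUnit (fromCols N₁ M₂)`
  have hmain : IsUnit (fromCols N₁ M₂) →
      IsUnit (fromBlocks X₁₁⁻¹ (0 : Matrix (Fin n) (Fin n) ℂ) (-(X₂₁ * X₁₁⁻¹)) 1) ∧
      ((fromCols N₁ M₂)⁻¹ * fromCols M₁ N₂ =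
        fromBlocks X₁₁⁻¹ (X₁₁⁻¹ * X₁₂) (-(X₂₁ * X₁₁⁻¹)) (-(X₂₁ * X₁₁⁻¹) * X₁₂ + X₂₂)) ∧
      (X = (fromBlocks X₁₁⁻¹ (0 : Matrix (Fin n) (Fin n) ℂ) (-(X₂₁ * X₁₁⁻¹)) 1)⁻¹ *
        fromBlocks 1 (X₁₁⁻¹ * X₁₂) (0 : Matrix (Fin n) (Fin n) ℂ)
          (-(X₂₁ * X₁₁⁻¹) * X₁₂ + X₂₂)) := by
    intro hNMu
    have hX₁₁ : IsUnit X₁₁ := hUnitIff.mp hNMu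
    obtain ⟨iX₁₁⟩ := hX₁₁.nonempty_invertible
    letI : Invertible (1 : Matrix (Fin n) (Fin n) ℂ) := invertibleOne
    letI : Invertible B := fromBlocksZero₁₂Invertible X₁₁ X₂₁ 1
    have hBinv : B⁻¹ = fromBlocks X₁₁⁻¹ 0 (-(X₂₁ * X₁₁⁻¹)) 1 := by
      apply Matrix.inv_eq_right_inv
      rw [hBdef, fromBlocks_multiply]
      simp [Matrix.mul_inv_of_invertible, ← Matrix.fromBlocks_one]
    refine ⟨?_, ?_, ?_⟩
    · rw [← hBinv]
      exact Matrix.isUnit_nonsing_inv_iff.mpr (isUnit_of_invertible B)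
    · rw [hNM, hMN, Matrix.mul_inv_rev, mul_assoc,
        Matrix.inv_mul_cancel_left_of_invertible, hBinv, fromBlocks_multiply]
      simp
    · rw [← hBinv, Matrix.inv_inv_of_invertible, hBdef, fromBlocks_multiply,
        ← hXblocks, fromBlocks_inj]
      exact ⟨by simp, by simp [Matrix.mul_inv_cancel_left_of_invertible], by simp,
        by noncomm_ring⟩
  constructor
  · constructor
    · rintro ⟨A₁₁, A₁₂, A₂₁, A₂₂, hL, hfact⟩
      rw [hUnitIff]
      obtain ⟨iL⟩ := hL.nonempty_invertible
      have hLX : fromBlocks A₁₁ 0 A₂₁ 1 * X = fromBlocks 1 A₁₂ 0 A₂₂ := by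
        rw [hfact, Matrix.mul_inv_cancel_left_of_invertible]
      rw [← hXblocks, fromBlocks_multiply] at hLX
      have h11 : A₁₁ * X₁₁ = 1 := by
        have := congrArg Matrix.toBlocks₁₁ hLX
        simpa using this
      have h11' : X₁₁ * A₁₁ = 1 := mul_eq_one_comm.mp h11
      exact ⟨⟨X₁₁, A₁₁, h11', h11⟩, rfl⟩
    · intro hNMu
      obtain ⟨hLu, _, hkey⟩ := hmain hNMu
      exact ⟨X₁₁⁻¹, X₁₁⁻¹ * X₁₂, -(X₂₁ * X₁₁⁻¹), -(X₂₁ * X₁₁⁻¹) * X₁₂ + X₂₂, hLu, hkey⟩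
  · intro hNMu
    obtain ⟨_, hA, hkey⟩ := hmain hNMu
    rw [hA]
    simpa using hkey
end
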